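/- Let K be a totally real number field, p an odd prime, and let (a, b, c) ∈ O_K³ be a non-trivial solution of a^p + b^p = c² with aO_K + bO_K + cO_K = O_K. Let E be the Weierstrass curve Y² = X³ + 4cX² + 4a^p X with j-invariant j_E = 2^6 (a^p + 4b^p)³ / (a²b)^p. Let P be a prime ideal of O_K dividing 2 such that P | ab, and suppose p > 6·v_P(2). Then v_P(j_E) < 0 and p ∤ v_P(j_E). -/

import Mathlib

/-!
Since `P ∣ ab` and `a, b, c` are coprime, exactly one of `a, b` lies in `P`. Writing
`e = v_P(2)`, the bound `p > 6e` makes one summand of `aᵖ + 4bᵖ` strictly dominant: if `P ∣ a`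
then `v_P(aᵖ + 4bᵖ) = 2e` and `v_P(j) = 2(6e - p·v_P(a))`, and if `P ∣ b` then
`v_P(aᵖ + 4bᵖ) = 0` and `v_P(j) = 6e - p·v_P(b)`. In both cases `0 < 6e < p`, so `v_P(j) < 0`,
and `p` (odd) divides neither `2·6e` nor `6e`.
-/

open NumberField IsDedekindDomain

open scoped Classical in
/-- The additive `P`-adic valuation on a number field `K`, normalized so that
`vP P x` is the exponent of `P` in the factorization of `x`, with `vP P 0 = 0`. -/
noncomputable def vP {K : Type} [Field K] [NumberField K]
    (P : HeightOneSpectrum (𝓞 K)) (x : K) : ℤ :=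
  if hx : x = 0 then 0
  else - Multiplicative.toAdd (WithZero.unzero ((P.valuation K).ne_zero_iff.mpr hx))

lemma Ideal.IsPrime.not_mem_both_of_pow_add_pow_eq_sq {R : Type*} [CommRing R] {I : Ideal R}
    (hI : I.IsPrime) {a b c : R} {n : ℕ} (hn : n ≠ 0) (h : a ^ n + b ^ n = c ^ 2)
    (hcop : Ideal.span {a} ⊔ Ideal.span {b} ⊔ Ideal.span {c} = ⊤) : ¬ (a ∈ I ∧ b ∈ I) := by
  rintro ⟨ha, hb⟩
  have hc : c ∈ I := hI.mem_of_pow_mem 2 (h ▸ I.add_mem (I.pow_mem_of_mem ha n (by omega))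
    (I.pow_mem_of_mem hb n (by omega)))
  apply hI.ne_top
  rw [eq_top_iff, ← hcop]
  simp only [sup_le_iff, Ideal.span_singleton_le_iff_mem]
  exact ⟨⟨ha, hb⟩, hc⟩

lemma neg_and_not_dvd_mul_sub_mul {p k f x : ℤ} (hp : Prime p) (hpk : ¬ p ∣ k) (hk : 0 < k)
    (hf : 0 < f) (hfp : f < p) (hx : 1 ≤ x) : k * (f - p * x) < 0 ∧ ¬ p ∣ k * (f - p * x) := by
  refine ⟨mul_neg_of_pos_of_neg hk (by nlinarith), fun hdvd => ?_⟩
  rcases hp.dvd_or_dvd hdvd with h | h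
  · exact hpk h
  · have hpf : p ∣ f := by simpa using h.add (dvd_mul_right p x)
    exact absurd (Int.le_of_dvd hf hpf) (not_le.mpr hfp)

section

variable {K : Type} [Field K] [NumberField K] (P : HeightOneSpectrum (𝓞 K))

lemma vP_eq_neg_log_valuation (x : K) : vP P x = -WithZero.log (P.valuation K x) := by
  unfold vP
  split_ifs with hx
  · simp [hx]
  · rw [WithZero.toAdd_unzero_eq_log]

lemma vP_mul {x y : K} (hx : x ≠ 0) (hy : y ≠ 0) : vP P (x * y) = vP P x + vP P y := by
  simp only [vP_eq_neg_log_valuation, map_mul]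
  rw [WithZero.log_mul (by simpa using hx) (by simpa using hy)]
  ring

lemma vP_pow (x : K) (n : ℕ) : vP P (x ^ n) = n * vP P x := by
  simp [vP_eq_neg_log_valuation]

lemma vP_div {x y : K} (hx : x ≠ 0) (hy : y ≠ 0) : vP P (x / y) = vP P x - vP P y := by
  simp only [vP_eq_neg_log_valuation, map_div₀]
  rw [WithZero.log_div (by simpa using hx) (by simpa using hy)]
  ring

lemma valuation_lt_of_vP_lt {x y : K} (hx : x ≠ 0) (h : vP P x < vP P y) :
    P.valuation K y < P.valuation K x := by
  rcases eq_or_ne y 0 with rfl | hy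
  · rw [map_zero]
    exact zero_lt_iff.mpr (by simpa using hx)
  rw [vP_eq_neg_log_valuation, vP_eq_neg_log_valuation, neg_lt_neg_iff,
    WithZero.log_lt_log (by simpa using hy) (by simpa using hx)] at h
  exact h

lemma add_ne_zero_of_vP_lt {x y : K} (hx : x ≠ 0) (h : vP P x < vP P y) : x + y ≠ 0 := by
  intro hxy
  have := (P.valuation K).map_add_eq_of_lt_left (valuation_lt_of_vP_lt P hx h)
  rw [hxy, map_zero, eq_comm, map_eq_zero] at this
  exact hx this

lemma vP_add_eq_left_of_lt {x y : K} (hx : x ≠ 0) (h : vP P x < vP P y) :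
    vP P (x + y) = vP P x := by
  rw [vP_eq_neg_log_valuation, vP_eq_neg_log_valuation,
    (P.valuation K).map_add_eq_of_lt_left (valuation_lt_of_vP_lt P hx h)]

lemma vP_algebraMap_nonneg (r : 𝓞 K) : 0 ≤ vP P (algebraMap (𝓞 K) K r) := by
  rcases eq_or_ne r 0 with rfl | hr
  · simp [vP]
  rw [vP_eq_neg_log_valuation, neg_nonneg, WithZero.log_le_iff_le_exp (by simpa using hr)]
  exact P.valuation_le_one r

lemma vP_algebraMap_pos_iff {r : 𝓞 K} (hr : r ≠ 0) :
    0 < vP P (algebraMap (𝓞 K) K r) ↔ r ∈ P.asIdeal := by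
  rw [← P.valuation_lt_one_iff_mem (K := K), vP_eq_neg_log_valuation, neg_pos,
    WithZero.log_lt_iff_lt_exp (by simpa using hr)]
  rfl

lemma vP_algebraMap_eq_zero_iff {r : 𝓞 K} (hr : r ≠ 0) :
    vP P (algebraMap (𝓞 K) K r) = 0 ↔ r ∉ P.asIdeal := by
  rw [← vP_algebraMap_pos_iff P hr, not_lt]
  exact ⟨le_of_eq, fun h => le_antisymm h (vP_algebraMap_nonneg P r)⟩

section FreyJInvariant

variable {A B : K} {p : ℕ}

lemma vP_frey_j (hA : A ≠ 0) (hB : B ≠ 0) (hN : A ^ p + 4 * B ^ p ≠ 0) :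
    vP P (2 ^ 6 * (A ^ p + 4 * B ^ p) ^ 3 / (A ^ 2 * B) ^ p) =
      6 * vP P 2 + 3 * vP P (A ^ p + 4 * B ^ p) - p * (2 * vP P A + vP P B) := by
  have h2 : (2 : K) ^ 6 ≠ 0 := pow_ne_zero 6 two_ne_zero
  rw [vP_div P (mul_ne_zero h2 (pow_ne_zero 3 hN)) (pow_ne_zero p (by positivity)),
    vP_mul P h2 (pow_ne_zero 3 hN), vP_pow, vP_pow, vP_pow, vP_mul P (by positivity) hB, vP_pow]
  push_cast
  ring

lemma vP_four_mul_pow (hB : B ≠ 0) : vP P (4 * B ^ p) = 2 * vP P 2 + p * vP P B := by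
  rw [vP_mul P (by norm_num) (pow_ne_zero p hB), show (4 : K) = 2 ^ 2 by norm_num, vP_pow, vP_pow]
  push_cast
  ring

lemma vP_frey_j_of_vP_eq_zero_right (hA : A ≠ 0) (hB : B ≠ 0) (hvB : vP P B = 0)
    (hlt : 2 * vP P 2 < p * vP P A) :
    vP P (2 ^ 6 * (A ^ p + 4 * B ^ p) ^ 3 / (A ^ 2 * B) ^ p) =
      2 * (6 * vP P 2 - p * vP P A) := by
  have hlt' : vP P (4 * B ^ p) < vP P (A ^ p) := by
    rwa [vP_four_mul_pow P hB, hvB, vP_pow, mul_zero, add_zero]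
  have h4B : 4 * B ^ p ≠ 0 := mul_ne_zero (by norm_num) (pow_ne_zero p hB)
  rw [vP_frey_j P hA hB (add_comm (A ^ p) _ ▸ add_ne_zero_of_vP_lt P h4B hlt'), add_comm (A ^ p),
    vP_add_eq_left_of_lt P h4B hlt', vP_four_mul_pow P hB, hvB]
  ring

lemma vP_frey_j_of_vP_eq_zero_left (hA : A ≠ 0) (hB : B ≠ 0) (hvA : vP P A = 0)
    (hlt : 0 < 2 * vP P 2 + p * vP P B) :
    vP P (2 ^ 6 * (A ^ p + 4 * B ^ p) ^ 3 / (A ^ 2 * B) ^ p) = 6 * vP P 2 - p * vP P B := by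
  have hlt' : vP P (A ^ p) < vP P (4 * B ^ p) := by
    rwa [vP_four_mul_pow P hB, vP_pow, hvA, mul_zero]
  have hAp : A ^ p ≠ 0 := pow_ne_zero p hA
  rw [vP_frey_j P hA hB (add_ne_zero_of_vP_lt P hAp hlt'), vP_add_eq_left_of_lt P hAp hlt',
    vP_pow, hvA]
  ring

end FreyJInvariant

end

theorem frey_curve_pp2_j_valuation_at_two_general
    (K : Type) [Field K] [NumberField K]
    (p : ℕ) (hp : p.Prime) (hp2 : p ≠ 2) (a b c : 𝓞 K)
    (hsol : a ^ p + b ^ p = c ^ 2)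
    (hnontriv : ¬ (a * b * c = 0 ∨ (a = 1 ∧ b = 1 ∧ c ^ 2 = 2)))
    (hcoprime : Ideal.span {a} ⊔ Ideal.span {b} ⊔ Ideal.span {c} = ⊤)
    (P : HeightOneSpectrum (𝓞 K)) (hP2 : (2 : 𝓞 K) ∈ P.asIdeal)
    (hPab : a * b ∈ P.asIdeal)
    (hpbig : 6 * vP P (2 : K) < (p : ℤ))
    (j : K)
    (hj : j = 2 ^ 6 * (algebraMap (𝓞 K) K (a ^ p + 4 * b ^ p)) ^ 3 /
      (algebraMap (𝓞 K) K (a ^ 2 * b)) ^ p) :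
    vP P j < 0 ∧ ¬ ((p : ℤ) ∣ vP P j) := by
  have hab : a * b ≠ 0 := left_ne_zero_of_mul (not_or.mp hnontriv).1
  have ha : a ≠ 0 := left_ne_zero_of_mul hab
  have hb : b ≠ 0 := right_ne_zero_of_mul hab
  have hA : algebraMap (𝓞 K) K a ≠ 0 := by simpa using ha
  have hB : algebraMap (𝓞 K) K b ≠ 0 := by simpa using hb
  have he : 0 < vP P 2 := by
    rw [← map_ofNat (algebraMap (𝓞 K) K) 2]
    exact (vP_algebraMap_pos_iff P two_ne_zero).mpr hP2
  have hpZ : Prime (p : ℤ) := Nat.prime_iff_prime_int.mp hp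
  have hnotboth := P.isPrime.not_mem_both_of_pow_add_pow_eq_sq hp.ne_zero hsol hcoprime
  simp only [map_add, map_mul, map_pow, map_ofNat] at hj
  subst hj
  rcases P.isPrime.mem_or_mem hPab with haP | hbP
  · have hvA : 1 ≤ vP P (algebraMap (𝓞 K) K a) := (vP_algebraMap_pos_iff P ha).mpr haP
    have hvB := (vP_algebraMap_eq_zero_iff P hb).mpr fun hbP => hnotboth ⟨haP, hbP⟩
    rw [vP_frey_j_of_vP_eq_zero_right P hA hB hvB (by nlinarith)]
    have hp2Z : ¬ (p : ℤ) ∣ 2 := by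
      rw [Int.natCast_dvd_ofNat]
      exact (Nat.prime_dvd_prime_iff_eq hp Nat.prime_two).not.mpr hp2
    exact neg_and_not_dvd_mul_sub_mul hpZ hp2Z two_pos (by omega) hpbig hvA
  · have hvB : 1 ≤ vP P (algebraMap (𝓞 K) K b) := (vP_algebraMap_pos_iff P hb).mpr hbP
    have hvA := (vP_algebraMap_eq_zero_iff P ha).mpr fun haP => hnotboth ⟨haP, hbP⟩
    rw [vP_frey_j_of_vP_eq_zero_left P hA hB hvA (by nlinarith), ← one_mul (_ - _)]
    exact neg_and_not_dvd_mul_sub_mul hpZ hpZ.not_dvd_one one_pos (by omega) hpbig hvB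

/-- **Potentially multiplicative reduction of the Frey curve `Y² = X³ + 4cX² + 4aᵖX` at
primes above `2`**. Let `(a,b,c)` be a non-trivial solution of `aᵖ + bᵖ = c²` over a
totally real field `K` with `aO_K + bO_K + cO_K = O_K`, let `P ∣ 2` with `P ∣ ab`, and
suppose `p > 6 v_P 2`. Then the `j`-invariant `j_E = 2⁶(aᵖ + 4bᵖ)³/(a²b)ᵖ` satisfies
`v_P(j_E) < 0` and `p ∤ v_P(j_E)`. -/
theorem frey_curve_pp2_j_valuation_at_two
    (K : Type) [Field K] [NumberField K]
    (htotallyReal : ∀ v : InfinitePlace K, v.IsReal)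
    (p : ℕ) (hp : p.Prime) (hp2 : p ≠ 2) (a b c : 𝓞 K)
    (hsol : a ^ p + b ^ p = c ^ 2)
    (hnontriv : ¬ (a * b * c = 0 ∨ (a = 1 ∧ b = 1 ∧ c ^ 2 = 2)))
    (hcoprime : Ideal.span {a} ⊔ Ideal.span {b} ⊔ Ideal.span {c} = ⊤)
    (P : HeightOneSpectrum (𝓞 K)) (hP2 : (2 : 𝓞 K) ∈ P.asIdeal)
    (hPab : a * b ∈ P.asIdeal)
    (hpbig : 6 * vP P (2 : K) < (p : ℤ))
    (j : K)
    (hj : j = 2 ^ 6 * (algebraMap (𝓞 K) K (a ^ p + 4 * b ^ p)) ^ 3 /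
      (algebraMap (𝓞 K) K (a ^ 2 * b)) ^ p) :
    vP P j < 0 ∧ ¬ ((p : ℤ) ∣ vP P j) :=
  frey_curve_pp2_j_valuation_at_two_general K p hp hp2 a b c hsol hnontriv hcoprime P hP2 hPab hpbig
    j hj
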